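/- arXiv:2604.09135 — 4 statements merged into one kernel-verified Lean document; each statement's English description precedes it below -/
import Mathlib

section
/- Let (𝒰, 𝒜, μ) be a σ-finite measure space, g : 𝒰 → ℝ^d measurable, and p : ℝ^d → [0,∞) a bounded measurable probability density on ℝ^d. Assume there exist disjoint measurable sets U₁, U₂ ⊆ 𝒰 with 0 < μ(U₁) = μ(U₂) < ∞ and a measurable bijection T : U₁ → U₂ that is measure preserving (the pushforward under T of μ restricted to U₁ equals μ restricted to U₂) and satisfies g(T(u)) = g(u) for all u ∈ U₁. Define δ := 1_{U₁} − 1_{U₂}. Then δ is μ-integrable, essentially bounded, and not μ-almost-everywhere zero, yet for every w ∈ ℝ^d the function u ↦ p(w − g(u)) δ(u) is μ-integrable with ∫_{𝒰} p(w − g(u)) δ(u) μ(du) = 0. Consequently, the error mechanism {u ↦ p(w − g(u))} is neither L1-complete nor L∞-complete. -/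
open MeasureTheory

/-! The map `T` carries `μ` on `U₁` to `μ` on `U₂` and leaves the kernel `u ↦ p (w - g u)`
unchanged, so the kernel has the same integral over `U₁` and over `U₂`; these two integrals are
exactly the two halves of `∫ p (w - g u) δ(u) dμ(u)`. -/

theorem abs_indicator_one_sub_indicator_one_le {α : Type*} (s t : Set α) (a : α) :
    |s.indicator (1 : α → ℝ) a - t.indicator 1 a| ≤ 1 := by
  by_cases hs : a ∈ s <;> by_cases ht : a ∈ t <;> simp [hs, ht]

section

variable {α : Type*} [MeasurableSpace α] {μ : Measure α} {s t : Set α}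

theorem not_indicator_one_sub_indicator_one_ae_eq_zero (hst : Disjoint s t) (hs : μ s ≠ 0) :
    ¬ (fun a => s.indicator (1 : α → ℝ) a - t.indicator 1 a) =ᵐ[μ] 0 := by
  refine fun h => hs (measure_mono_null (fun a ha => ?_) h)
  simp [ha, hst.notMem_of_mem_left ha]

theorem integral_mul_indicator_one_sub_indicator_one {K : α → ℝ}
    (hs : MeasurableSet s) (ht : MeasurableSet t)
    (hKs : IntegrableOn K s μ) (hKt : IntegrableOn K t μ) :
    ∫ a, K a * (s.indicator 1 a - t.indicator 1 a) ∂μ = ∫ a in s, K a ∂μ - ∫ a in t, K a ∂μ := by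
  have hsplit : (fun a => K a * (s.indicator 1 a - t.indicator 1 a))
      = fun a => s.indicator K a - t.indicator K a := by
    ext a
    by_cases has : a ∈ s <;> by_cases hat : a ∈ t <;> simp [has, hat]
  rw [hsplit, integral_sub (hKs.integrable_indicator hs) (hKt.integrable_indicator ht),
    integral_indicator hs, integral_indicator ht]

theorem setIntegral_eq_of_map_restrict_eq {E : Type*} [NormedAddCommGroup E] [NormedSpace ℝ E]
    {T : α → α} (hT : Measurable T) (hs : MeasurableSet s)
    (hmap : (μ.restrict s).map T = μ.restrict t)
    {f : α → E} (hf : AEStronglyMeasurable f (μ.restrict t)) (hfT : ∀ a ∈ s, f (T a) = f a) :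
    ∫ a in t, f a ∂μ = ∫ a in s, f a ∂μ := by
  rw [← hmap, integral_map hT.aemeasurable (hmap ▸ hf)]
  exact setIntegral_congr_fun hs hfT

end

theorem non_injective_error_mechanism_not_complete_general
    {𝒰 : Type*} [MeasurableSpace 𝒰] (μ : Measure 𝒰)
    (d : ℕ)
    (g : 𝒰 → EuclideanSpace ℝ (Fin d)) (hg : Measurable g)
    (p : EuclideanSpace ℝ (Fin d) → ℝ)
    (hp_meas : Measurable p)
    (hp_nonneg : ∀ x, 0 ≤ p x)
    (hp_bdd : ∃ C : ℝ, ∀ x, p x ≤ C)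
    (U₁ U₂ : Set 𝒰) (hU₁ : MeasurableSet U₁) (hU₂ : MeasurableSet U₂)
    (hdisj : Disjoint U₁ U₂)
    (hpos : 0 < μ U₁) (heq : μ U₁ = μ U₂) (hfin : μ U₂ < ⊤)
    (T : 𝒰 → 𝒰) (hT_meas : Measurable T)
    (hT_mp : Measure.map T (μ.restrict U₁) = μ.restrict U₂)
    (hgT : ∀ u ∈ U₁, g (T u) = g u) :
    (Integrable
        (fun u => Set.indicator U₁ (fun _ => (1 : ℝ)) u
          - Set.indicator U₂ (fun _ => (1 : ℝ)) u) μ) ∧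
    (∃ C : ℝ, ∀ᵐ u ∂μ, |Set.indicator U₁ (fun _ => (1 : ℝ)) u
          - Set.indicator U₂ (fun _ => (1 : ℝ)) u| ≤ C) ∧
    ¬ ((fun u => Set.indicator U₁ (fun _ => (1 : ℝ)) u
          - Set.indicator U₂ (fun _ => (1 : ℝ)) u) =ᵐ[μ] 0) ∧
    (∀ w : EuclideanSpace ℝ (Fin d),
      Integrable
        (fun u => p (w - g u) * (Set.indicator U₁ (fun _ => (1 : ℝ)) u
          - Set.indicator U₂ (fun _ => (1 : ℝ)) u)) μ ∧
      ∫ u, p (w - g u) * (Set.indicator U₁ (fun _ => (1 : ℝ)) u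
          - Set.indicator U₂ (fun _ => (1 : ℝ)) u) ∂μ = 0) := by
  have hfin₁ : μ U₁ < ⊤ := heq ▸ hfin
  have hδ : Integrable (fun u => U₁.indicator (1 : 𝒰 → ℝ) u - U₂.indicator 1 u) μ :=
    ((integrableOn_const hfin₁.ne).integrable_indicator hU₁).sub
      ((integrableOn_const hfin.ne).integrable_indicator hU₂)
  refine ⟨hδ, ⟨1, ae_of_all _ (abs_indicator_one_sub_indicator_one_le U₁ U₂)⟩,
    not_indicator_one_sub_indicator_one_ae_eq_zero hdisj hpos.ne', fun w => ?_⟩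
  obtain ⟨C, hC⟩ := hp_bdd
  have hK : AEStronglyMeasurable (fun u => p (w - g u)) μ :=
    (hp_meas.comp (measurable_const.sub hg)).aestronglyMeasurable
  have hKC : ∀ᵐ u ∂μ, ‖p (w - g u)‖ ≤ C :=
    ae_of_all _ fun u => (Real.norm_of_nonneg (hp_nonneg _)).trans_le (hC _)
  have hK_on {U : Set 𝒰} (hU : μ U < ⊤) : IntegrableOn (fun u => p (w - g u)) U μ :=
    .of_bound hU hK.restrict C (ae_restrict_of_ae hKC)
  refine ⟨hδ.bdd_mul hK hKC, ?_⟩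
  calc _ = ∫ u in U₁, p (w - g u) ∂μ - ∫ u in U₂, p (w - g u) ∂μ :=
        integral_mul_indicator_one_sub_indicator_one hU₁ hU₂ (hK_on hfin₁) (hK_on hfin)
    _ = 0 := by
      rw [setIntegral_eq_of_map_restrict_eq hT_meas hU₁ hT_mp hK.restrict
        (fun u hu => by rw [hgT u hu]), sub_self]

/-- **A non-injective additive noise model yields a non-complete error mechanism.**
If `g : 𝒰 → ℝ^d` identifies two disjoint sets `U₁, U₂` of equal positive finite measure via
a measure-preserving bijection `T : U₁ → U₂` with `g ∘ T = g` on `U₁`, then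
`δ = 1_{U₁} − 1_{U₂}` is integrable, essentially bounded and not a.e. zero, yet
`∫ p (w − g u) δ(u) dμ(u) = 0` for every `w`; hence `{u ↦ p (w − g u)}` is neither
L1-complete nor L∞-complete. -/
theorem non_injective_error_mechanism_not_complete
    {𝒰 : Type*} [MeasurableSpace 𝒰] (μ : Measure 𝒰) [SigmaFinite μ]
    (d : ℕ)
    (g : 𝒰 → EuclideanSpace ℝ (Fin d)) (hg : Measurable g)
    (p : EuclideanSpace ℝ (Fin d) → ℝ)
    (hp_meas : Measurable p)
    (hp_nonneg : ∀ x, 0 ≤ p x)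
    (hp_bdd : ∃ C : ℝ, ∀ x, p x ≤ C)
    (hp_dens : ∫ x, p x = 1)
    (U₁ U₂ : Set 𝒰) (hU₁ : MeasurableSet U₁) (hU₂ : MeasurableSet U₂)
    (hdisj : Disjoint U₁ U₂)
    (hpos : 0 < μ U₁) (heq : μ U₁ = μ U₂) (hfin : μ U₂ < ⊤)
    (T : 𝒰 → 𝒰) (hT_meas : Measurable T) (hT_bij : Set.BijOn T U₁ U₂)
    (hT_mp : Measure.map T (μ.restrict U₁) = μ.restrict U₂)
    (hgT : ∀ u ∈ U₁, g (T u) = g u) :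
    (Integrable
        (fun u => Set.indicator U₁ (fun _ => (1 : ℝ)) u
          - Set.indicator U₂ (fun _ => (1 : ℝ)) u) μ) ∧
    (∃ C : ℝ, ∀ᵐ u ∂μ, |Set.indicator U₁ (fun _ => (1 : ℝ)) u
          - Set.indicator U₂ (fun _ => (1 : ℝ)) u| ≤ C) ∧
    ¬ ((fun u => Set.indicator U₁ (fun _ => (1 : ℝ)) u
          - Set.indicator U₂ (fun _ => (1 : ℝ)) u) =ᵐ[μ] 0) ∧
    (∀ w : EuclideanSpace ℝ (Fin d),
      Integrable
        (fun u => p (w - g u) * (Set.indicator U₁ (fun _ => (1 : ℝ)) u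
          - Set.indicator U₂ (fun _ => (1 : ℝ)) u)) μ ∧
      ∫ u, p (w - g u) * (Set.indicator U₁ (fun _ => (1 : ℝ)) u
          - Set.indicator U₂ (fun _ => (1 : ℝ)) u) ∂μ = 0) :=
  non_injective_error_mechanism_not_complete_general μ d g hg p hp_meas hp_nonneg hp_bdd U₁ U₂ hU₁
    hU₂ hdisj hpos heq hfin T hT_meas hT_mp hgT
end

section
/- Let α_UW, α_UX, α_UY, α_XY be real numbers and let σ²_NU, σ²_E, σ²_NX, σ²_NY be strictly positive real numbers. Define σ_XX := α²_UX σ²_NU + σ²_NX, σ_XY := (α_UY + α_XY α_UX) α_UX σ²_NU + α_XY σ²_NX, σ_WW := α²_UW σ²_NU + σ²_E, σ_WX := α_UW α_UX σ²_NU, and σ_WY := (α_UY + α_XY α_UX) α_UW σ²_NU. Then σ_XX σ_WW − σ_WX² = α²_UX σ²_NU σ²_E + α²_UW σ²_NX σ²_NU + σ²_NX σ²_E > 0 and (σ_XY σ_WW − σ_WY σ_WX) / (σ_XX σ_WW − σ_WX²) = α_XY + (α_UX α_UY σ²_NU σ²_E) / (α²_UX σ²_NU σ²_E + α²_UW σ²_NX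 σ²_NU + σ²_NX σ²_E) = α_XY + α_UX α_UY / (α²_UX + α²_UW σ²_NX / σ²_E + σ²_NX / σ²_NU). -/
/-- **Bias of OLS when adjusting for the proxy.** In the linear Gaussian SCM
`U = N_U`, `W = α_UW U + E`, `X = α_UX U + N_X`, `Y = α_UY U + α_XY X + N_Y`, the
population OLS coefficient on `X` when regressing `Y` on `(X, W)` equals
`α_XY + α_UX α_UY σ²_NU σ²_E / (α²_UX σ²_NU σ²_E + α²_UW σ²_NX σ²_NU + σ²_NX σ²_E)`,
with the explicit positive denominator. -/
theorem ols_adjust_for_proxy_bias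
    (αUW αUX αUY αXY : ℝ) (σNU σE σNX σNY : ℝ)
    (hσNU : 0 < σNU) (hσE : 0 < σE) (hσNX : 0 < σNX) (hσNY : 0 < σNY)
    (σXX σXY σWW σWX σWY : ℝ)
    (hσXX : σXX = αUX ^ 2 * σNU + σNX)
    (hσXY : σXY = (αUY + αXY * αUX) * αUX * σNU + αXY * σNX)
    (hσWW : σWW = αUW ^ 2 * σNU + σE)
    (hσWX : σWX = αUW * αUX * σNU)
    (hσWY : σWY = (αUY + αXY * αUX) * αUW * σNU) :
    σXX * σWW - σWX ^ 2
        = αUX ^ 2 * σNU * σE + αUW ^ 2 * σNX * σNU + σNX * σE ∧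
    0 < σXX * σWW - σWX ^ 2 ∧
    (σXY * σWW - σWY * σWX) / (σXX * σWW - σWX ^ 2)
        = αXY + (αUX * αUY * σNU * σE)
            / (αUX ^ 2 * σNU * σE + αUW ^ 2 * σNX * σNU + σNX * σE) ∧
    (σXY * σWW - σWY * σWX) / (σXX * σWW - σWX ^ 2)
        = αXY + (αUX * αUY)
            / (αUX ^ 2 + αUW ^ 2 * σNX / σE + σNX / σNU) := by
  subst hσXX hσXY hσWW hσWX hσWY
  have hD : (0:ℝ) < αUX ^ 2 * σNU * σE + αUW ^ 2 * σNX * σNU + σNX * σE := by positivity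
  have h1 : (αUX ^ 2 * σNU + σNX) * (αUW ^ 2 * σNU + σE) - (αUW * αUX * σNU) ^ 2
      = αUX ^ 2 * σNU * σE + αUW ^ 2 * σNX * σNU + σNX * σE := by ring
  refine ⟨h1, by rw [h1]; exact hD, ?_, ?_⟩
  · rw [h1]
    rw [div_eq_iff (ne_of_gt hD)]
    field_simp
    ring
  · rw [h1]
    have hD2 : (0:ℝ) < αUX ^ 2 + αUW ^ 2 * σNX / σE + σNX / σNU := by positivity
    rw [div_eq_iff (ne_of_gt hD)]
    field_simp
    ring
end

section
/- Let α_UW, α_UX, α_UY, α_XY be real numbers with α_UW ≠ 0 and let σ²_NU, σ²_E, σ²_NX, σ²_NY be strictly positive real numbers. Define σ_XX := α²_UX σ²_NU + σ²_NX, σ_XY := (α_UY + α_XY α_UX) α_UX σ²_NU + α_XY σ²_NX, σ_WW := α²_UW σ²_NU + σ²_E, σ_WX := α_UW α_UX σ²_NU, and σ_WY := (α_UY + α_XY α_UX) α_UW σ²_NU. Then σ_WW − σ²_E = α²_UW σ²_NU > 0, the denominator σ_XX − σ_WX² / (σ_WW − σ²_E) = σ²_NX > 0, and (σ_XY − σ_WY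 σ_WX / (σ_WW − σ²_E)) / (σ_XX − σ_WX² / (σ_WW − σ²_E)) = α_XY. -/
/-- **Matrix adjustment in the linear Gaussian case (Pearl, Kuroki–Pearl).** Knowing the
measurement error variance `σ²_E`, the causal coefficient `α_XY` is recovered from the
observable covariances of `(W, X, Y)`:
`(σ_XY − σ_WY σ_WX / (σ_WW − σ²_E)) / (σ_XX − σ_WX² / (σ_WW − σ²_E)) = α_XY`,
where `σ_WW − σ²_E = α²_UW σ²_NU > 0` and the denominator equals `σ²_NX > 0`. -/
theorem linear_gaussian_proxy_identifiability
    (αUW αUX αUY αXY : ℝ) (hαUW : αUW ≠ 0) (σNU σE σNX σNY : ℝ)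
    (hσNU : 0 < σNU) (hσE : 0 < σE) (hσNX : 0 < σNX) (hσNY : 0 < σNY)
    (σXX σXY σWW σWX σWY : ℝ)
    (hσXX : σXX = αUX ^ 2 * σNU + σNX)
    (hσXY : σXY = (αUY + αXY * αUX) * αUX * σNU + αXY * σNX)
    (hσWW : σWW = αUW ^ 2 * σNU + σE)
    (hσWX : σWX = αUW * αUX * σNU)
    (hσWY : σWY = (αUY + αXY * αUX) * αUW * σNU) :
    σWW - σE = αUW ^ 2 * σNU ∧
    0 < σWW - σE ∧
    σXX - σWX ^ 2 / (σWW - σE) = σNX ∧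
    0 < σXX - σWX ^ 2 / (σWW - σE) ∧
    (σXY - σWY * σWX / (σWW - σE)) / (σXX - σWX ^ 2 / (σWW - σE)) = αXY := by
  have h1 : σWW - σE = αUW ^ 2 * σNU := by rw [hσWW]; ring
  have hpos : 0 < αUW ^ 2 * σNU := mul_pos (by positivity) hσNU
  have hne : αUW ^ 2 * σNU ≠ 0 := ne_of_gt hpos
  have h3 : σXX - σWX ^ 2 / (σWW - σE) = σNX := by
    rw [h1, hσXX, hσWX]; field_simp; ring
  have h5 : (σXY - σWY * σWX / (σWW - σE)) / (σXX - σWX ^ 2 / (σWW - σE)) = αXY := by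
    rw [h3, h1, hσXY, hσWY, hσWX]; field_simp; ring
  exact ⟨h1, h1 ▸ hpos, h3, h3 ▸ hσNX, h5⟩
end

section
/- Let (Ω, 𝓕, ℙ) be a probability space, k a natural number, and let U, W : Ω → Fin k be measurable random variables with finitely many values, and X : Ω → 𝒳, Y : Ω → 𝒴 measurable maps into measurable spaces. Assume ℙ(U = u) > 0 for every u ∈ Fin k, and assume W is conditionally independent of (X, Y) given U in the sense that for all u, w ∈ Fin k and every measurable S ⊆ 𝒳 × 𝒴: ℙ({W = w} ∩ {(X,Y) ∈ S} ∩ {U = u}) · ℙ(U = u) = ℙ({W = w} ∩ {U = u}) · ℙ({(X,Y) ∈ S} ∩ {U = u}). Define the k × k matrix F by F(w,u) := ℙ({W = w} ∩ {U = u}) / ℙ(U = u). Then (1) for every w ∈ Fin k and measurable S ⊆ 𝒳 × 𝒴: ℙ({W = w} ∩ {(X,Y) ∈ S}) = ∑_{u ∈ Fin k} F(w,u) · ℙ({U = u} ∩ {(X,Y) ∈ S}); and (2) if F is invertible, then for every measurable S the vector (ℙ({U = u} ∩ {(X,Y) ∈ S}))_{u ∈ Fin k} equals F⁻¹ applied to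 the vector (ℙ({W = w} ∩ {(X,Y) ∈ S}))_{w ∈ Fin k}, so the joint law of (U, X, Y) is determined by the known error matrix F and the observable joint law of (W, X, Y). -/
open MeasureTheory

/-- **Matrix adjustment / effect restoration (Pearl, Kuroki–Pearl, discrete case).**
Let `U, W : Ω → Fin k` with `ℙ(U = u) > 0` for all `u`, and `(X, Y)` measurable, with `W`
conditionally independent of `(X, Y)` given `U`. Let `F w u = ℙ(W = w, U = u) / ℙ(U = u)`
be the error matrix. Then (1) `ℙ(W = w, (X,Y) ∈ S) = ∑_u F w u · ℙ(U = u, (X,Y) ∈ S)`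
for all `w` and measurable `S`; and (2) if `F` is invertible, the vector
`(ℙ(U = u, (X,Y) ∈ S))_u` equals `F⁻¹` applied to `(ℙ(W = w, (X,Y) ∈ S))_w`, so the joint
law of `(U, X, Y)` is determined by `F` and the observable law of `(W, X, Y)`. -/
theorem matrix_adjustment_effect_restoration
    {Ω 𝒳 𝒴 : Type*} [MeasurableSpace Ω] [MeasurableSpace 𝒳] [MeasurableSpace 𝒴]
    (ℙ : Measure Ω) [IsProbabilityMeasure ℙ]
    (k : ℕ)
    (U W : Ω → Fin k) (hU : Measurable U) (hW : Measurable W)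
    (X : Ω → 𝒳) (Y : Ω → 𝒴) (hX : Measurable X) (hY : Measurable Y)
    (hUpos : ∀ u : Fin k, 0 < ℙ {ω | U ω = u})
    (hCI : ∀ (u w : Fin k) (S : Set (𝒳 × 𝒴)), MeasurableSet S →
      ℙ ({ω | W ω = w} ∩ {ω | (X ω, Y ω) ∈ S} ∩ {ω | U ω = u}) * ℙ {ω | U ω = u}
        = ℙ ({ω | W ω = w} ∩ {ω | U ω = u})
            * ℙ ({ω | (X ω, Y ω) ∈ S} ∩ {ω | U ω = u}))
    (F : Matrix (Fin k) (Fin k) ℝ)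
    (hF : ∀ w u : Fin k,
      F w u = (ℙ ({ω | W ω = w} ∩ {ω | U ω = u})).toReal / (ℙ {ω | U ω = u}).toReal) :
    (∀ (w : Fin k) (S : Set (𝒳 × 𝒴)), MeasurableSet S →
      (ℙ ({ω | W ω = w} ∩ {ω | (X ω, Y ω) ∈ S})).toReal
        = ∑ u : Fin k, F w u * (ℙ ({ω | U ω = u} ∩ {ω | (X ω, Y ω) ∈ S})).toReal) ∧
    (IsUnit F.det →
      ∀ S : Set (𝒳 × 𝒴), MeasurableSet S →
        (fun u : Fin k => (ℙ ({ω | U ω = u} ∩ {ω | (X ω, Y ω) ∈ S})).toReal)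
          = F⁻¹.mulVec
              (fun w : Fin k =>
                (ℙ ({ω | W ω = w} ∩ {ω | (X ω, Y ω) ∈ S})).toReal)) := by
  have hXY : Measurable (fun ω => (X ω, Y ω)) := hX.prodMk hY
  have part1 : ∀ (w : Fin k) (S : Set (𝒳 × 𝒴)), MeasurableSet S →
      (ℙ ({ω | W ω = w} ∩ {ω | (X ω, Y ω) ∈ S})).toReal
        = ∑ u : Fin k, F w u * (ℙ ({ω | U ω = u} ∩ {ω | (X ω, Y ω) ∈ S})).toReal := by
    intro w S hS
    set A : Set Ω := {ω | W ω = w} ∩ {ω | (X ω, Y ω) ∈ S} with hA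
    have hAmeas : MeasurableSet A :=
      (hW (measurableSet_singleton w)).inter (hXY hS)
    have hdec : ℙ A = ∑ u : Fin k, ℙ (A ∩ {ω | U ω = u}) := by
      have hcover : A = ⋃ u : Fin k, A ∩ {ω | U ω = u} := by
        ext ω; simp [hA]
      have hdisj : Pairwise (Function.onFun Disjoint fun u : Fin k => A ∩ {ω | U ω = u}) := by
        intro u v huv
        refine Set.disjoint_left.2 fun ω hω hω' => huv ?_
        exact hω.2.symm.trans hω'.2
      have hmeas' : ∀ u : Fin k, MeasurableSet (A ∩ {ω | U ω = u}) := fun u =>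
        hAmeas.inter (hU (measurableSet_singleton u))
      calc ℙ A = ℙ (⋃ u : Fin k, A ∩ {ω | U ω = u}) := by rw [← hcover]
        _ = ∑' u : Fin k, ℙ (A ∩ {ω | U ω = u}) := measure_iUnion hdisj hmeas'
        _ = ∑ u : Fin k, ℙ (A ∩ {ω | U ω = u}) := tsum_fintype _
    rw [hdec, ENNReal.toReal_sum (fun u _ => measure_ne_top ℙ _)]
    refine Finset.sum_congr rfl fun u _ => ?_
    have h := hCI u w S hS
    have hp0 : (ℙ {ω | U ω = u}).toReal ≠ 0 :=
      (ENNReal.toReal_pos (hUpos u).ne' (measure_ne_top ℙ _)).ne'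
    have h' : (ℙ (A ∩ {ω | U ω = u})).toReal * (ℙ {ω | U ω = u}).toReal
        = (ℙ ({ω | W ω = w} ∩ {ω | U ω = u})).toReal
            * (ℙ ({ω | (X ω, Y ω) ∈ S} ∩ {ω | U ω = u})).toReal := by
      rw [← ENNReal.toReal_mul, ← ENNReal.toReal_mul, h]
    rw [hF w u, Set.inter_comm ({ω | U ω = u})]
    field_simp
    linarith [h']
  refine ⟨part1, fun hdet S hS => ?_⟩
  have hvec : (fun w : Fin k => (ℙ ({ω | W ω = w} ∩ {ω | (X ω, Y ω) ∈ S})).toReal)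
      = F.mulVec (fun u : Fin k => (ℙ ({ω | U ω = u} ∩ {ω | (X ω, Y ω) ∈ S})).toReal) := by
    funext w
    rw [part1 w S hS]
    simp [Matrix.mulVec, dotProduct]
  rw [hvec, Matrix.mulVec_mulVec, Matrix.nonsing_inv_mul F hdet, Matrix.one_mulVec]
end
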